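/- Contraction Lemma (Lemma 3.1): Under Assumption (K) on the kernel k, for every λ∈ℂ and every T>0 the operator R_λ maps B_b([0,T],ℂ) into itself, is Lipschitz continuous in the supremum norm, and there exists n_T∈ℕ such that the n_T-th power R_λ^{n_T} is a strict contraction on B_b([0,T],ℂ) (i.e., has Lipschitz constant strictly less than 1 with respect to the supremum norm). -/

import Mathlib

open MeasureTheory Filter

noncomputable section

def AssumptionK (k : ℝ → ℝ → ℝ) : Prop :=
  Measurable (Function.uncurry k) ∧
  ∃ α ε : ℝ, 0 ≤ α ∧ α < 1 ∧ 0 < ε ∧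
    ∀ T : ℝ, 0 < T → ∃ KT : ℝ,
      ∀ t : ℝ, 0 < t → t ≤ T →
        MeasureTheory.IntegrableOn (fun s => |k t s| ^ (1 + ε)) (Set.Ioc 0 t) ∧
        t ^ (α - 1 / (1 + ε)) *
          (∫ s in Set.Ioc (0:ℝ) t, |k t s| ^ (1 + ε)) ^ (1 / (1 + ε)) ≤ KT

noncomputable def Rop (k : ℝ → ℝ → ℝ) (lam : ℂ) (g : ℝ → ℂ) : ℝ → ℂ :=
  fun t => if 0 < t then 1 - lam * ∫ s in Set.Ioc (0:ℝ) t, (k t s : ℂ) * g s else 1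

def BddBorelOn (T : ℝ) (g : ℝ → ℂ) : Prop :=
  Measurable g ∧ ∃ M : ℝ, ∀ t ∈ Set.Icc (0:ℝ) T, ‖g t‖ ≤ M

/-!
Hölder's inequality with exponents `p = 1 + ε` and its conjugate `q` turns Assumption (K) into
the moment bounds `∫₀ᵗ |k(t,s)| s^β ds ≤ K (βq + 1)^(-1/q) t^(1-α+β)` for all `β ≥ 0`.
Since `R_λ g - R_λ f = -λ ∫₀ᵗ k(t,s) (g - f)(s) ds`, induction on `n` gives
`|R_λⁿ g - R_λⁿ f|(t) ≤ C ∏_{j<n} |λ| K (j(1-α)q + 1)^(-1/q) · t^(n(1-α))` whenever `|g - f| ≤ C`.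
After bounding `t ≤ T`, the factors `|λ| K (j(1-α)q + 1)^(-1/q) T^(1-α)` tend to `0`, so their
partial products eventually drop below `1`.
-/

open Set Topology

theorem setIntegral_Ioc_rpow {t r : ℝ} (ht : 0 ≤ t) (hr : -1 < r) :
    ∫ s in Ioc 0 t, s ^ r = t ^ (r + 1) / (r + 1) := by
  rw [← intervalIntegral.integral_of_le ht, integral_rpow (Or.inl hr),
    Real.zero_rpow (by linarith), sub_zero]

theorem integrableOn_abs_mul_rpow {f : ℝ → ℝ} {t β : ℝ} (hβ : 0 ≤ β)
    (hf : IntegrableOn f (Ioc 0 t)) :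
    IntegrableOn (fun s => |f s| * s ^ β) (Ioc 0 t) :=
  IntegrableOn.mul_continuousOn_of_subset hf.abs (Real.continuous_rpow_const hβ).continuousOn
    measurableSet_Ioc isCompact_Icc Ioc_subset_Icc_self

theorem setIntegral_abs_mul_rpow_le {p q : ℝ} (hpq : p.HolderConjugate q) {f : ℝ → ℝ}
    {t β : ℝ} (ht : 0 < t) (hβ : 0 ≤ β)
    (hf : MemLp f (ENNReal.ofReal p) (volume.restrict (Ioc 0 t))) :
    ∫ s in Ioc 0 t, |f s| * s ^ β ≤
      (∫ s in Ioc 0 t, |f s| ^ p) ^ (1 / p) * (t ^ (β + 1 / q) * (β * q + 1) ^ (-(1 / q))) := by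
  have hq := hpq.symm.pos
  have hw : MemLp (fun s : ℝ => s ^ β) (ENNReal.ofReal q) (volume.restrict (Ioc 0 t)) := by
    refine MemLp.of_bound (Real.continuous_rpow_const hβ).aestronglyMeasurable (t ^ β) ?_
    refine (ae_restrict_iff' measurableSet_Ioc).2 (ae_of_all _ fun s hs => ?_)
    rw [Real.norm_of_nonneg (Real.rpow_nonneg hs.1.le β)]
    exact Real.rpow_le_rpow hs.1.le hs.2 hβ
  have hnorm : ∀ s ∈ Ioc (0:ℝ) t, ‖s ^ β‖ = s ^ β := fun s hs =>
    Real.norm_of_nonneg (Real.rpow_nonneg hs.1.le β)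
  have hlhs : ∫ s in Ioc 0 t, ‖f s‖ * ‖s ^ β‖ = ∫ s in Ioc 0 t, |f s| * s ^ β :=
    setIntegral_congr_fun measurableSet_Ioc fun s hs => by rw [hnorm s hs, Real.norm_eq_abs]
  have hweight : ∫ s in Ioc 0 t, ‖s ^ β‖ ^ q = t ^ (β * q + 1) / (β * q + 1) := by
    rw [← setIntegral_Ioc_rpow ht.le (by linarith [mul_nonneg hβ hq.le])]
    exact setIntegral_congr_fun measurableSet_Ioc fun s hs => by
      rw [hnorm s hs, ← Real.rpow_mul hs.1.le]
  have hholder := integral_mul_norm_le_Lp_mul_Lq hpq hf hw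
  rw [hlhs, hweight] at hholder
  refine hholder.trans_eq ?_
  simp only [Real.norm_eq_abs]
  have hbq : 0 < β * q + 1 := by positivity
  congr 1
  rw [Real.div_rpow (Real.rpow_nonneg ht.le _) hbq.le, ← Real.rpow_mul ht.le,
    Real.rpow_neg hbq.le, div_eq_mul_inv]
  congr 2
  field_simp

theorem integrableOn_ofReal_mul {κ : ℝ → ℝ} {d : ℝ → ℂ} {S : Set ℝ} {M : ℝ}
    (hκ : IntegrableOn κ S) (hd : Measurable d) (hS : MeasurableSet S) (hM : ∀ s ∈ S, ‖d s‖ ≤ M) :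
    IntegrableOn (fun s => (κ s : ℂ) * d s) S :=
  hκ.ofReal.mul_bdd hd.aestronglyMeasurable ((ae_restrict_iff' hS).2 (ae_of_all _ hM))

theorem norm_setIntegral_ofReal_mul_le {κ : ℝ → ℝ} {d : ℝ → ℂ} {t A β : ℝ} (hβ : 0 ≤ β)
    (hκ : IntegrableOn κ (Ioc 0 t)) (hd : ∀ s ∈ Ioc 0 t, ‖d s‖ ≤ A * s ^ β) :
    ‖∫ s in Ioc 0 t, (κ s : ℂ) * d s‖ ≤ A * ∫ s in Ioc 0 t, |κ s| * s ^ β := by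
  rw [← integral_const_mul]
  refine norm_integral_le_of_norm_le ((integrableOn_abs_mul_rpow hβ hκ).const_mul A)
    ((ae_restrict_iff' measurableSet_Ioc).2 (ae_of_all _ fun s hs => ?_))
  rw [norm_mul, Complex.norm_real, Real.norm_eq_abs, mul_left_comm]
  exact mul_le_mul_of_nonneg_left (hd s hs) (abs_nonneg _)

theorem exists_prod_range_lt_one_of_tendsto_zero {a : ℕ → ℝ} (ha : ∀ j, 0 ≤ a j)
    (hlim : Tendsto a atTop (𝓝 0)) : ∃ n, ∏ j ∈ Finset.range n, a j < 1 := by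
  obtain ⟨J, hJ⟩ :=
    eventually_atTop.1 (hlim.eventually (gt_mem_nhds (by norm_num : (0:ℝ) < 1 / 2)))
  set B := ∏ j ∈ Finset.range J, a j
  have hB : 0 ≤ B := Finset.prod_nonneg fun j _ => ha j
  obtain ⟨m, hm⟩ := (((tendsto_pow_atTop_nhds_zero_of_lt_one (by norm_num) (by norm_num :
    (1 / 2 : ℝ) < 1)).const_mul B).eventually (gt_mem_nhds (by norm_num : B * 0 < 1))).exists
  refine ⟨J + m, ?_⟩
  calc ∏ j ∈ Finset.range (J + m), a j = B * ∏ i ∈ Finset.range m, a (J + i) :=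
        Finset.prod_range_add _ _ _
    _ ≤ B * (1 / 2) ^ m := by
        gcongr
        exact (Finset.prod_le_prod (fun i _ => ha _) fun i _ => (hJ _ (J.le_add_right i)).le).trans
          (by simp)
    _ < 1 := hm

theorem measurable_setIntegral_Ioc_kernel_mul {k : ℝ → ℝ → ℝ}
    (hkm : Measurable (Function.uncurry k)) {g : ℝ → ℂ} (hg : Measurable g) :
    Measurable fun t => ∫ s in Ioc 0 t, (k t s : ℂ) * g s := by
  have hS : MeasurableSet {p : ℝ × ℝ | p.2 ∈ Ioc 0 p.1} :=
    (measurableSet_lt measurable_const measurable_snd).inter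
      (measurableSet_le measurable_snd measurable_fst)
  have hF : StronglyMeasurable (Function.uncurry fun t s =>
      (Ioc 0 t).indicator (fun s => (k t s : ℂ) * g s) s) := by
    refine Measurable.stronglyMeasurable ?_
    exact ((Complex.measurable_ofReal.comp hkm).mul (hg.comp measurable_snd)).indicator hS
  simp_rw [← integral_indicator measurableSet_Ioc]
  exact hF.integral_prod_right.measurable

theorem measurable_Rop {k : ℝ → ℝ → ℝ} (hkm : Measurable (Function.uncurry k)) (lam : ℂ)
    {g : ℝ → ℂ} (hg : Measurable g) : Measurable (Rop k lam g) :=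
  Measurable.ite measurableSet_Ioi
    (measurable_const.sub ((measurable_setIntegral_Ioc_kernel_mul hkm hg).const_mul lam))
    measurable_const

structure KernelMomentBound (k : ℝ → ℝ → ℝ) (T γ K : ℝ) (c : ℝ → ℝ) : Prop where
  exponent_nonneg : 0 ≤ γ
  const_nonneg : 0 ≤ K
  weight_nonneg : ∀ β, 0 ≤ β → 0 ≤ c β
  integrableOn : ∀ t ∈ Ioc 0 T, IntegrableOn (k t) (Ioc 0 t)
  setIntegral_le : ∀ t ∈ Ioc 0 T, ∀ β, 0 ≤ β →
    ∫ s in Ioc 0 t, |k t s| * s ^ β ≤ K * c β * t ^ (γ + β)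

theorem AssumptionK.exists_kernelMomentBound {k : ℝ → ℝ → ℝ} (hk : AssumptionK k) {T : ℝ}
    (hT : 0 < T) :
    ∃ γ K : ℝ, ∃ c : ℝ → ℝ, 0 < γ ∧ Tendsto c atTop (𝓝 0) ∧ KernelMomentBound k T γ K c := by
  obtain ⟨hkm, α, ε, -, hα1, hε, hK⟩ := hk
  obtain ⟨K, hK⟩ := hK T hT
  set p := 1 + ε
  set q := p.conjExponent
  have hpq : p.HolderConjugate q := .conjExponent (by linarith)
  have hq := hpq.symm.pos
  refine ⟨1 - α, K, fun β => (β * q + 1) ^ (-(1 / q)), by linarith,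
    (tendsto_rpow_neg_atTop (by positivity)).comp
      (tendsto_atTop_add_const_right _ 1 (tendsto_id.atTop_mul_const hq)), ?_⟩
  have hLp : ∀ t ∈ Ioc 0 T, MemLp (k t) (ENNReal.ofReal p) (volume.restrict (Ioc 0 t)) ∧
      (∫ s in Ioc 0 t, |k t s| ^ p) ^ (1 / p) ≤ K * t ^ (1 / p - α) := by
    intro t ht
    obtain ⟨hkp, hKt⟩ := hK t ht.1 ht.2
    refine ⟨?_, ?_⟩
    · rw [← integrable_norm_rpow_iff hkm.of_uncurry_left.aestronglyMeasurable
        (by simpa using hpq.pos) ENNReal.ofReal_ne_top, ENNReal.toReal_ofReal hpq.nonneg]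
      exact hkp
    · rw [← neg_sub, Real.rpow_neg ht.1.le, ← div_eq_mul_inv]
      exact (le_div_iff₀' (Real.rpow_pos_of_pos ht.1 _)).2 hKt
  refine ⟨by linarith, ?_, fun β hβ => Real.rpow_nonneg (by positivity) _,
    fun t ht => (hLp t ht).1.integrable (by simpa using hpq.lt.le), fun t ht β hβ => ?_⟩
  · obtain ⟨-, hKT⟩ := hK T hT le_rfl
    refine le_trans ?_ hKT
    have : 0 ≤ ∫ s in Ioc 0 T, |k T s| ^ p :=
      integral_nonneg fun s => Real.rpow_nonneg (abs_nonneg _) p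
    positivity
  · have ht0 := ht.1
    calc ∫ s in Ioc 0 t, |k t s| * s ^ β
        ≤ (∫ s in Ioc 0 t, |k t s| ^ p) ^ (1 / p) * (t ^ (β + 1 / q) * (β * q + 1) ^ (-(1 / q))) :=
          setIntegral_abs_mul_rpow_le hpq ht0 hβ (hLp t ht).1
      _ ≤ K * t ^ (1 / p - α) * (t ^ (β + 1 / q) * (β * q + 1) ^ (-(1 / q))) := by
          gcongr; exact (hLp t ht).2
      _ = K * (β * q + 1) ^ (-(1 / q)) * t ^ (1 - α + β) := by
          rw [show 1 - α + β = (1 / p - α) + (β + 1 / q) by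
            have := hpq.one_div_add_one_div; linarith, Real.rpow_add ht0 (1 / p - α)]
          ring

namespace KernelMomentBound

variable {k : ℝ → ℝ → ℝ} {T γ K : ℝ} {c : ℝ → ℝ} (hk : KernelMomentBound k T γ K c) (lam : ℂ)
include hk

theorem integrableOn_kernel_mul {g : ℝ → ℂ} (hg : BddBorelOn T g) {t : ℝ} (ht : t ∈ Ioc 0 T) :
    IntegrableOn (fun s => (k t s : ℂ) * g s) (Ioc 0 t) := by
  obtain ⟨hgm, M, hM⟩ := hg
  exact integrableOn_ofReal_mul (hk.integrableOn t ht) hgm measurableSet_Ioc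
    fun s hs => hM s ⟨hs.1.le, hs.2.trans ht.2⟩

theorem norm_Rop_sub_Rop_le {f g : ℝ → ℂ} (hf : BddBorelOn T f) (hg : BddBorelOn T g)
    {t A β : ℝ} (ht : t ∈ Ioc 0 T) (hβ : 0 ≤ β)
    (hfg : ∀ s ∈ Ioc 0 t, ‖g s - f s‖ ≤ A * s ^ β) :
    ‖Rop k lam g t - Rop k lam f t‖ ≤ ‖lam‖ * K * c β * A * t ^ (γ + β) := by
  have hA : 0 ≤ A := nonneg_of_mul_nonneg_left ((norm_nonneg _).trans (hfg t ⟨ht.1, le_rfl⟩))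
    (Real.rpow_pos_of_pos ht.1 β)
  have hsub : Rop k lam g t - Rop k lam f t =
      -(lam * ∫ s in Ioc 0 t, (k t s : ℂ) * (g s - f s)) := by
    simp only [Rop, if_pos ht.1, mul_sub]
    rw [integral_sub (hk.integrableOn_kernel_mul hg ht) (hk.integrableOn_kernel_mul hf ht)]
    ring
  rw [hsub, norm_neg, norm_mul]
  calc ‖lam‖ * ‖∫ s in Ioc 0 t, (k t s : ℂ) * (g s - f s)‖
      ≤ ‖lam‖ * (A * ∫ s in Ioc 0 t, |k t s| * s ^ β) := by
        gcongr; exact norm_setIntegral_ofReal_mul_le hβ (hk.integrableOn t ht) hfg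
    _ ≤ ‖lam‖ * (A * (K * c β * t ^ (γ + β))) := by gcongr; exact hk.setIntegral_le t ht β hβ
    _ = ‖lam‖ * K * c β * A * t ^ (γ + β) := by ring

theorem bddBorelOn_Rop (hkm : Measurable (Function.uncurry k)) {g : ℝ → ℂ}
    (hg : BddBorelOn T g) : BddBorelOn T (Rop k lam g) := by
  obtain ⟨hgm, M, hM⟩ := hg
  refine ⟨measurable_Rop hkm lam hgm, 1 + ‖lam‖ * K * c 0 * max M 0 * T ^ γ, fun t ht => ?_⟩
  have hK := hk.const_nonneg
  have hc := hk.weight_nonneg 0 le_rfl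
  have hT : 0 ≤ T := ht.1.trans ht.2
  rcases ht.1.eq_or_lt with rfl | ht0
  · simp only [Rop, lt_irrefl, if_false, norm_one, le_add_iff_nonneg_right]
    positivity
  have hRop0 : Rop k lam 0 t = 1 := by simp [Rop, ht0]
  have hdiff := hk.norm_Rop_sub_Rop_le lam (f := 0) (A := max M 0)
    ⟨measurable_const, 0, by simp⟩ ⟨hgm, M, hM⟩ ⟨ht0, ht.2⟩ le_rfl fun s hs => by
      simpa using (hM s ⟨hs.1.le, hs.2.trans ht.2⟩).trans (le_max_left M 0)
  rw [hRop0, add_zero] at hdiff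
  calc ‖Rop k lam g t‖ ≤ ‖(1 : ℂ)‖ + ‖Rop k lam g t - 1‖ := norm_le_norm_add_norm_sub' _ _
    _ ≤ 1 + ‖lam‖ * K * c 0 * max M 0 * T ^ γ := by
        rw [norm_one]
        gcongr
        exact hdiff.trans (by gcongr; exacts [hk.exponent_nonneg, ht.2])

theorem bddBorelOn_iterate_Rop (hkm : Measurable (Function.uncurry k)) {g : ℝ → ℂ}
    (hg : BddBorelOn T g) (n : ℕ) : BddBorelOn T ((Rop k lam)^[n] g) := by
  induction n with
  | zero => exact hg
  | succ n ih => rw [Function.iterate_succ_apply']; exact hk.bddBorelOn_Rop lam hkm ih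

theorem norm_iterate_Rop_sub_le (hkm : Measurable (Function.uncurry k)) {f g : ℝ → ℂ}
    (hf : BddBorelOn T f) (hg : BddBorelOn T g) {C : ℝ}
    (hfg : ∀ s ∈ Icc 0 T, ‖g s - f s‖ ≤ C) (n : ℕ) :
    ∀ t ∈ Ioc 0 T, ‖(Rop k lam)^[n] g t - (Rop k lam)^[n] f t‖ ≤
      C * (∏ j ∈ Finset.range n, ‖lam‖ * K * c (j * γ)) * t ^ (n * γ) := by
  induction n with
  | zero => simpa using fun t ht => hfg t (Ioc_subset_Icc_self ht)
  | succ n ih =>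
    intro t ht
    rw [Function.iterate_succ_apply', Function.iterate_succ_apply']
    refine (hk.norm_Rop_sub_Rop_le lam (hk.bddBorelOn_iterate_Rop lam hkm hf n)
      (hk.bddBorelOn_iterate_Rop lam hkm hg n) ht
      (mul_nonneg n.cast_nonneg hk.exponent_nonneg)
      fun s hs => ih s ⟨hs.1, hs.2.trans ht.2⟩).trans_eq ?_
    rw [Finset.prod_range_succ]
    push_cast
    ring_nf

theorem norm_iterate_Rop_sub_le_mul (hkm : Measurable (Function.uncurry k)) {f g : ℝ → ℂ}
    (hf : BddBorelOn T f) (hg : BddBorelOn T g) {C : ℝ} (hC : 0 ≤ C)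
    (hfg : ∀ s ∈ Icc 0 T, ‖g s - f s‖ ≤ C) (n : ℕ) {t : ℝ} (ht : t ∈ Icc 0 T) :
    ‖(Rop k lam)^[n] g t - (Rop k lam)^[n] f t‖ ≤
      (∏ j ∈ Finset.range n, ‖lam‖ * K * c (j * γ) * T ^ γ) * C := by
  have hT : 0 ≤ T := ht.1.trans ht.2
  have hfactor : ∀ j : ℕ, 0 ≤ ‖lam‖ * K * c (j * γ) :=
    fun j => mul_nonneg (mul_nonneg (norm_nonneg _) hk.const_nonneg)
      (hk.weight_nonneg _ (mul_nonneg j.cast_nonneg hk.exponent_nonneg))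
  rcases ht.1.eq_or_lt with rfl | ht0
  · cases n with
    | zero => simpa using hfg 0 ht
    | succ n =>
      simp only [Function.iterate_succ_apply', Rop, lt_irrefl, if_false, sub_self, norm_zero]
      exact mul_nonneg (Finset.prod_nonneg fun j _ => mul_nonneg (hfactor j)
        (Real.rpow_nonneg hT γ)) hC
  calc ‖(Rop k lam)^[n] g t - (Rop k lam)^[n] f t‖
      ≤ C * (∏ j ∈ Finset.range n, ‖lam‖ * K * c (j * γ)) * t ^ (n * γ) :=
        hk.norm_iterate_Rop_sub_le lam hkm hf hg hfg n t ⟨ht0, ht.2⟩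
    _ ≤ C * (∏ j ∈ Finset.range n, ‖lam‖ * K * c (j * γ)) * T ^ (n * γ) := by
        have := Finset.prod_nonneg fun j (_ : j ∈ Finset.range n) => hfactor j
        gcongr
        exacts [mul_nonneg n.cast_nonneg hk.exponent_nonneg, ht.2]
    _ = (∏ j ∈ Finset.range n, ‖lam‖ * K * c (j * γ) * T ^ γ) * C := by
        rw [← Finset.prod_mul_pow_card, Finset.card_range, mul_comm (n : ℝ),
          Real.rpow_mul_natCast hT]
        ring

end KernelMomentBound

theorem stmt2 (k : ℝ → ℝ → ℝ) (hk : AssumptionK k) (lam : ℂ) (T : ℝ) (hT : 0 < T) :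
    (∀ g : ℝ → ℂ, BddBorelOn T g → BddBorelOn T (Rop k lam g)) ∧
    (∃ L : ℝ, 0 ≤ L ∧ ∀ f g : ℝ → ℂ, BddBorelOn T f → BddBorelOn T g →
      ∀ C : ℝ, 0 ≤ C → (∀ s ∈ Set.Icc (0:ℝ) T, ‖g s - f s‖ ≤ C) →
      ∀ t ∈ Set.Icc (0:ℝ) T, ‖Rop k lam g t - Rop k lam f t‖ ≤ L * C) ∧
    (∃ nT : ℕ, ∃ q : ℝ, 0 ≤ q ∧ q < 1 ∧
      ∀ f g : ℝ → ℂ, BddBorelOn T f → BddBorelOn T g →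
      ∀ C : ℝ, 0 ≤ C → (∀ s ∈ Set.Icc (0:ℝ) T, ‖g s - f s‖ ≤ C) →
      ∀ t ∈ Set.Icc (0:ℝ) T,
        ‖(Rop k lam)^[nT] g t - (Rop k lam)^[nT] f t‖ ≤ q * C) := by
  have hkm := hk.1
  obtain ⟨γ, K, c, hγ, hc, hkc⟩ := hk.exists_kernelMomentBound hT
  set a : ℕ → ℝ := fun j => ‖lam‖ * K * c (j * γ) * T ^ γ
  have ha : ∀ j, 0 ≤ a j := fun j =>
    mul_nonneg (mul_nonneg (mul_nonneg (norm_nonneg _) hkc.const_nonneg)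
      (hkc.weight_nonneg _ (by positivity))) (by positivity)
  have hlim : Tendsto a atTop (𝓝 0) := by
    simpa [a] using ((hc.comp (tendsto_natCast_atTop_atTop.atTop_mul_const hγ)).const_mul
      (‖lam‖ * K)).mul_const (T ^ γ)
  obtain ⟨n, hn⟩ := exists_prod_range_lt_one_of_tendsto_zero ha hlim
  refine ⟨fun g hg => hkc.bddBorelOn_Rop lam hkm hg, ⟨a 0, ha 0, ?_⟩,
    ⟨n, _, Finset.prod_nonneg fun j _ => ha j, hn, ?_⟩⟩
  · intro f g hf hg C hC hfg t ht
    simpa [a] using hkc.norm_iterate_Rop_sub_le_mul lam hkm hf hg hC hfg 1 ht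
  · exact fun f g hf hg C hC hfg t ht => hkc.norm_iterate_Rop_sub_le_mul lam hkm hf hg hC hfg n ht
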